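/- arXiv:2405.05567 — 2 statements merged into one kernel-verified Lean document; each statement's English description precedes it below -/
import Mathlib

section
/- For every m ≥ 4 there exists a 2-information super-set for the binary Reed-Muller code RM(1,m) of size 2m+1. That is, there is a multiset T of 2m+1 coordinates of RM(1,m) such that every (2m−1)-subset of T contains m+1 coordinates at which the columns of a generator matrix of RM(1,m) are linearly independent. -/
/-- `I` is an information set for the code generated by the rows of `G`:
`I` has as many coordinates as `G` has rows, and the columns of `G` indexed by `I`
are linearly independent (equivalently, the square submatrix `G_I` is invertible). -/
def IsInformationSet {F : Type*} [Field F] {ρ ι : Type*} [Fintype ρ]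
    (G : Matrix ρ ι F) (I : Finset ι) : Prop :=
  I.card = Fintype.card ρ ∧
    LinearIndependent F (fun j : ↥I => fun i : ρ => G i (j : ι))

/-- `T` is an `S`-information super-set for the code generated by the rows of `G`:
every sub-multiset of `T` of size `|T| - S` contains an information set. -/
def IsInfoSuperSet {F : Type*} [Field F] {ρ ι : Type*} [Fintype ρ]
    (G : Matrix ρ ι F) (S : ℕ) (T : Multiset ι) : Prop :=
  ∀ W ≤ T, Multiset.card W = Multiset.card T - S →
    ∃ I : Finset ι, I.val ≤ W ∧ IsInformationSet G I

/-- The minimum size of an `S`-information super-set for the code generated by `G`. -/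
noncomputable def minSuperSize {F : Type*} [Field F] {ρ ι : Type*} [Fintype ρ]
    (G : Matrix ρ ι F) (S : ℕ) : ℕ :=
  sInf {c | ∃ T : Multiset ι, IsInfoSuperSet G S T ∧ Multiset.card T = c}
/-- The row-reduced generator matrix of the binary first-order Reed–Muller code `RM(1,m)`:
the matrix `M` of all binary columns of length `m`, with an appended row equal to the
all-one vector plus the sum of the rows of `M`. Columns are indexed by vectors in `F_2^m`. -/
def RM1mat (m : ℕ) : Matrix (Fin (m + 1)) (Fin m → ZMod 2) (ZMod 2) :=
  fun i v => if h : (i : ℕ) < m then v ⟨i, h⟩ else 1 + ∑ j, v j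

/-- The multiset of `m+1` columns of `RM1mat m` forming the identity matrix `I_{m+1}`:
the zero column and the standard basis columns. -/
def idCols (m : ℕ) : Multiset (Fin m → ZMod 2) :=
  (0 : Fin m → ZMod 2) ::ₘ
    Multiset.map (fun j : Fin m => fun i => if i = j then 1 else 0) Finset.univ.val

/-!
A multiset `T` of coordinates is an `S`-information super-set as soon as every nonzero codeword
has more than `S` nonzero entries on `T`: otherwise some nonzero codeword vanishes on a
sub-multiset `W` with `|T| - |W| = S`, so the columns indexed by `W` do not span.

Take for `T` the `m + 1` columns of the generator matrix forming the identity, together with the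
`m` columns `e_a + e_b + e_last` for the edges `{a, b}` of an `m`-cycle on `Fin m` (the paper's
pairs `{1,2}, {m-1,m}, {i,i+2}` are the edges of such a cycle; here we use `{k, k+1 mod m}`).
On `T` the code is generated by `[I | P]`, where the rows of `P` are distinct and have weight at
least `2`; over `𝔽₂` a nonzero `x` then gives `wt(x) + wt(xP) ≥ 3`.
-/

open Finset Matrix

section InformationSet

variable {F ρ ι : Type*} [Field F] [Fintype ρ] (G : Matrix ρ ι F)

theorem span_transpose_image_eq_top {s : Set ι}
    (h : ∀ x : ρ → F, (∀ j ∈ s, (x ᵥ* G) j = 0) → x = 0) :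
    Submodule.span F (Gᵀ '' s) = ⊤ := by
  classical
  by_contra hne
  obtain ⟨f, hf, hmap⟩ :=
    Submodule.exists_dual_map_eq_bot_of_lt_top (lt_top_iff_ne_top.mpr hne) inferInstance
  have hf_apply (y : ρ → F) : f y = ∑ i, y i * f (Pi.single i 1) := by
    rw [LinearMap.pi_apply_eq_sum_univ]
    refine sum_congr rfl fun i _ => ?_
    rw [smul_eq_mul]
    congr! 3
    simp [Pi.single_apply, eq_comm]
  have hx := h (fun i => f (Pi.single i 1)) fun j hj => by
    have : f (Gᵀ j) = 0 := by
      rw [← Submodule.mem_bot F, ← hmap]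
      exact Submodule.mem_map_of_mem (Submodule.subset_span (Set.mem_image_of_mem _ hj))
    rw [hf_apply] at this
    simpa [vecMul, dotProduct, mul_comm] using this
  exact hf (LinearMap.ext fun y => by simp [hf_apply y, congrFun hx])

theorem exists_isInformationSet_subset {s : Finset ι}
    (h : Submodule.span F (Gᵀ '' s) = ⊤) : ∃ I ⊆ s, IsInformationSet G I := by
  classical
  obtain ⟨b, hbs, -, hspan, hli⟩ :=
    exists_linearIndepOn_extension (linearIndepOn_empty F Gᵀ) (Set.empty_subset (s : Set ι))
  set I := s.filter (· ∈ b)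
  have hb : b = I := by ext; simpa [I] using fun h => hbs h
  rw [hb] at hspan hli
  refine ⟨I, filter_subset _ _, ?_, hli⟩
  have hcard := finrank_span_eq_card hli
  have hrange : Set.range (fun j : (I : Set ι) => Gᵀ j) = Gᵀ '' I :=
    (Set.image_eq_range _ _).symm
  have htop : Submodule.span F (Gᵀ '' I) = ⊤ := eq_top_iff.mpr (h ▸ Submodule.span_le.mpr hspan)
  rw [hrange, htop, finrank_top, Module.finrank_fintype_fun_eq_card] at hcard
  simpa using hcard.symm

theorem isInfoSuperSet_of_lt_card_filter [DecidableEq F] {S : ℕ} {T : Multiset ι}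
    (h : ∀ x : ρ → F, x ≠ 0 → S < Multiset.card (T.filter fun j => (x ᵥ* G) j ≠ 0)) :
    IsInfoSuperSet G S T := by
  classical
  intro W hWT hW
  suffices hspan : Submodule.span F (Gᵀ '' W.toFinset) = ⊤ by
    obtain ⟨I, hIW, hI⟩ := exists_isInformationSet_subset G hspan
    exact ⟨I, (Multiset.le_iff_subset I.nodup).mpr fun j hj => Multiset.mem_toFinset.mp (hIW hj),
      hI⟩
  refine span_transpose_image_eq_top G fun x hx => ?_
  by_contra hx0
  have hfilter : T.filter (fun j => (x ᵥ* G) j ≠ 0) ≤ T - W := by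
    rw [← add_tsub_cancel_of_le hWT, Multiset.filter_add,
      Multiset.filter_eq_nil.mpr fun j hj => not_not.mpr (hx j (by simpa using hj)), zero_add,
      add_tsub_cancel_left]
    exact Multiset.filter_le _ _
  have := (h x hx0).trans_le (Multiset.card_le_card hfilter)
  rw [Multiset.card_sub hWT] at this
  omega

end InformationSet

section Binary

variable {ρ κ : Type*} [Fintype ρ]

theorem vecMul_apply_eq_sum_support_zmod_two (x : ρ → ZMod 2) (P : Matrix ρ κ (ZMod 2))
    (k : κ) : (x ᵥ* P) k = ∑ i with x i ≠ 0, P i k := by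
  rw [vecMul, dotProduct, ← sum_filter_of_ne fun i _ hi => left_ne_zero_of_mul hi]
  refine sum_congr rfl fun i hi => ?_
  rw [show x i = 1 from Fin.eq_one_of_ne_zero _ (mem_filter.mp hi).2, one_mul]

theorem three_le_card_support_add_card_support_vecMul [DecidableEq ρ] [Fintype κ]
    (P : Matrix ρ κ (ZMod 2))
    (hweight : ∀ i, 2 ≤ #{k | P i k ≠ 0}) (hP : Function.Injective P) {x : ρ → ZMod 2}
    (hx : x ≠ 0) : 3 ≤ #{i | x i ≠ 0} + #{k | (x ᵥ* P) k ≠ 0} := by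
  simp_rw [vecMul_apply_eq_sum_support_zmod_two]
  set s : Finset ρ := {i | x i ≠ 0}
  have hs_ne : s.Nonempty := by
    obtain ⟨i, hi⟩ := Function.ne_iff.mp hx
    exact ⟨i, mem_filter.mpr ⟨mem_univ i, hi⟩⟩
  obtain hcard | hcard | hcard : #s = 1 ∨ #s = 2 ∨ 3 ≤ #s := by
    have := hs_ne.card_pos; omega
  · obtain ⟨i, hi⟩ := card_eq_one.mp hcard
    have := hweight i
    simp only [hi, sum_singleton, card_singleton]
    omega
  · obtain ⟨i, j, hij, hi⟩ := card_eq_two.mp hcard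
    obtain ⟨k, hk⟩ := Function.ne_iff.mp (hP.ne hij)
    have : 0 < #{k | ∑ i ∈ s, P i k ≠ 0} := card_pos.mpr ⟨k, by
      simpa [hi, sum_pair hij] using fun h => hk (CharTwo.add_eq_zero.mp h)⟩
    omega
  · omega

end Binary

theorem isInfoSuperSet_two_of_submatrix_eq_one {ρ κ ι : Type*} [Fintype ρ] [DecidableEq ρ]
    [Fintype κ] (G : Matrix ρ ι (ZMod 2)) (u : ρ → ι) (w : κ → ι) (hu : G.submatrix id u = 1)
    (hweight : ∀ i, 2 ≤ #{k | G i (w k) ≠ 0}) (hrows : Function.Injective (G.submatrix id w)) :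
    IsInfoSuperSet G 2 (univ.val.map u + univ.val.map w) := by
  refine isInfoSuperSet_of_lt_card_filter G fun x hx => ?_
  have hxu (i : ρ) : (x ᵥ* G) (u i) = x i :=
    calc (x ᵥ* G) (u i) = (x ᵥ* G.submatrix id u) i := rfl
      _ = x i := by rw [hu, vecMul_one]
  have h := three_le_card_support_add_card_support_vecMul _ hweight hrows hx
  simp only [Multiset.filter_add, Multiset.card_add, Multiset.filter_map, Multiset.card_map,
    Function.comp_def, hxu]
  exact h

theorem finRotate_ne_self {m : ℕ} (hm : 2 ≤ m) (k : Fin m) : finRotate m k ≠ k :=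
  Equiv.Perm.mem_support.mp (support_finRotate_of_le hm ▸ mem_univ k)

theorem finRotate_finRotate_ne_self {m : ℕ} (hm : 3 ≤ m) (k : Fin m) :
    finRotate m (finRotate m k) ≠ k := by
  obtain ⟨n, rfl⟩ : ∃ n, m = n + 1 := ⟨m - 1, by omega⟩
  intro h
  have := congrArg Fin.val h
  simp only [coe_finRotate, Fin.ext_iff, Fin.val_last] at this
  split_ifs at this <;> simp_all [Fin.ext_iff] <;> omega

namespace RM1mat

variable {m : ℕ}

def unitCol (m : ℕ) : Fin (m + 1) → Fin m → ZMod 2 :=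
  Fin.lastCases 0 fun j => Pi.single j 1

def cycleCol (m : ℕ) (k : Fin m) : Fin m → ZMod 2 :=
  Pi.single k 1 + Pi.single (finRotate m k) 1

theorem apply_castSucc (j : Fin m) (v : Fin m → ZMod 2) : RM1mat m j.castSucc v = v j := by
  simp [RM1mat]

theorem apply_last (v : Fin m → ZMod 2) : RM1mat m (Fin.last m) v = 1 + ∑ j, v j := by
  simp [RM1mat]

theorem submatrix_unitCol : (RM1mat m).submatrix id (unitCol m) = 1 := by
  ext r i
  induction r using Fin.lastCases <;> induction i using Fin.lastCases <;>
    simp [unitCol, apply_castSucc, apply_last, Matrix.one_apply, Pi.single_apply,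
      (Fin.castSucc_ne_last _).symm, CharTwo.add_self_eq_zero]

theorem apply_last_cycleCol (k : Fin m) : RM1mat m (Fin.last m) (cycleCol m k) = 1 := by
  simp [apply_last, cycleCol, sum_add_distrib, CharTwo.add_self_eq_zero]

theorem apply_castSucc_cycleCol_ne_zero_iff (hm : 2 ≤ m) (j k : Fin m) :
    RM1mat m j.castSucc (cycleCol m k) ≠ 0 ↔ k = j ∨ finRotate m k = j := by
  have := finRotate_ne_self hm k
  simp only [apply_castSucc, cycleCol, Pi.add_apply, Pi.single_apply]
  by_cases h1 : j = k <;> by_cases h2 : j = finRotate m k <;> simp_all [eq_comm]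

theorem two_le_card_cycleCol_ne_zero (hm : 2 ≤ m) (r : Fin (m + 1)) :
    2 ≤ #{k | RM1mat m r (cycleCol m k) ≠ 0} := by
  induction r using Fin.lastCases with
  | last => simpa [apply_last_cycleCol] using hm
  | cast j =>
    have hne : j ≠ (finRotate m).symm j := fun h => finRotate_ne_self hm j <| by
      simpa only [← h] using (finRotate m).apply_symm_apply j
    calc 2 = #{j, (finRotate m).symm j} := (card_pair hne).symm
      _ ≤ _ := card_le_card fun k hk => by
        simp only [mem_filter, mem_univ, true_and, apply_castSucc_cycleCol_ne_zero_iff hm]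
        rcases mem_insert.mp hk with rfl | hk
        · exact Or.inl rfl
        · exact Or.inr (mem_singleton.mp hk ▸ (finRotate m).apply_symm_apply j)

theorem apply_castSucc_cycleCol_finRotate (hm : 3 ≤ m) (j : Fin m) :
    RM1mat m j.castSucc (cycleCol m (finRotate m j)) = 0 := by
  by_contra h
  rcases (apply_castSucc_cycleCol_ne_zero_iff (by omega) _ _).mp h with h | h
  · exact finRotate_ne_self (by omega) j h
  · exact finRotate_finRotate_ne_self hm j h

theorem injective_submatrix_cycleCol (hm : 3 ≤ m) :
    Function.Injective ((RM1mat m).submatrix id (cycleCol m)) := by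
  have hrow_eq {i j : Fin m}
      (h : ∀ k, RM1mat m i.castSucc (cycleCol m k) = RM1mat m j.castSucc (cycleCol m k)) :
      i = j ∨ finRotate m i = j := by
    have := (apply_castSucc_cycleCol_ne_zero_iff (m := m) (by omega) i i).mpr (Or.inl rfl)
    rwa [h, apply_castSucc_cycleCol_ne_zero_iff (by omega)] at this
  intro r r' h
  have hrow (k : Fin m) : RM1mat m r (cycleCol m k) = RM1mat m r' (cycleCol m k) := congrFun h k
  induction r using Fin.lastCases with
  | last =>
    induction r' using Fin.lastCases with
    | last => rfl
    | cast j =>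
      have := hrow (finRotate m j)
      rw [apply_last_cycleCol, apply_castSucc_cycleCol_finRotate hm] at this
      exact absurd this one_ne_zero
  | cast i =>
    induction r' using Fin.lastCases with
    | last =>
      have := hrow (finRotate m i)
      rw [apply_last_cycleCol, apply_castSucc_cycleCol_finRotate hm] at this
      exact absurd this zero_ne_one
    | cast j =>
      rcases hrow_eq hrow with rfl | hij
      · rfl
      rcases hrow_eq (fun k => (hrow k).symm) with rfl | hji
      · rfl
      · exact absurd (hij ▸ hji) (finRotate_finRotate_ne_self hm i)

end RM1mat

/-- For every `m ≥ 4` there exists a `2`-information super-set of size `2m+1` for the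
binary first-order Reed–Muller code `RM(1,m)`. -/
theorem rm1_two_superset (m : ℕ) (hm : 4 ≤ m) :
    ∃ T : Multiset (Fin m → ZMod 2),
      Multiset.card T = 2 * m + 1 ∧ IsInfoSuperSet (RM1mat m) 2 T := by
  refine ⟨univ.val.map (RM1mat.unitCol m) + univ.val.map (RM1mat.cycleCol m), ?_, ?_⟩
  · simp only [Multiset.card_add, Multiset.card_map, card_val, card_univ, Fintype.card_fin]
    omega
  · exact isInfoSuperSet_two_of_submatrix_eq_one _ _ _ RM1mat.submatrix_unitCol
      (RM1mat.two_le_card_cycleCol_ne_zero (by omega))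
      (RM1mat.injective_submatrix_cycleCol (by omega))
end

section
/- Let C be an [n,k]_q linear code with minimum distance d_min, and let S1, S2 be integers with 0 < S1, S2 < d_min. If T1 is an S1-information super-set and T2 is an S2-information super-set for C, then the multiset union T1 ⊎ T2 is an (S1+S2)-information super-set for C. Consequently L(S1+S2) ≤ L(S1) + L(S2), where L(S) denotes the minimum size of an S-information super-set for C. -/
/-! A sub-multiset `W` of `T₁ + T₂` missing at most `S₁ + S₂` elements splits as
`(W ∩ T₁) + (W - T₁)` with `W ∩ T₁ ≤ T₁` and `W - T₁ ≤ T₂`; the first part misses at most `S₁`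
elements of `T₁` or the second misses at most `S₂` elements of `T₂`, and the corresponding
super-set property yields an information set inside `W`. Adding minimal super-sets gives the
bound on `minSuperSize`. -/

theorem Multiset.exists_le_card_eq {α : Type*} {s : Multiset α} {m : ℕ}
    (h : m ≤ Multiset.card s) : ∃ t ≤ s, Multiset.card t = m := by
  obtain ⟨t, ht⟩ := Multiset.card_pos_iff_exists_mem.1 <| by
    rw [Multiset.card_powersetCard]
    exact Nat.choose_pos h
  exact ⟨t, Multiset.mem_powersetCard.1 ht⟩

section

variable {F : Type*} [Field F] {ρ ι : Type*} [Fintype ρ] {G : Matrix ρ ι F}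

namespace IsInfoSuperSet

theorem exists_le_of_card_sub_le {S : ℕ} {T W : Multiset ι} (hT : IsInfoSuperSet G S T)
    (hW : W ≤ T) (hcard : Multiset.card T - S ≤ Multiset.card W) :
    ∃ I : Finset ι, I.val ≤ W ∧ IsInformationSet G I := by
  obtain ⟨W', hW'W, hW'card⟩ := Multiset.exists_le_card_eq hcard
  obtain ⟨I, hIW', hI⟩ := hT W' (hW'W.trans hW) hW'card
  exact ⟨I, hIW'.trans hW'W, hI⟩

theorem add {S₁ S₂ : ℕ} {T₁ T₂ : Multiset ι} (h₁ : IsInfoSuperSet G S₁ T₁)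
    (h₂ : IsInfoSuperSet G S₂ T₂) : IsInfoSuperSet G (S₁ + S₂) (T₁ + T₂) := by
  classical
  intro W hW hcard
  have hle₁ : W ∩ T₁ ≤ T₁ := Multiset.inter_le_right
  have hle₂ : W - T₁ ≤ T₂ := by rwa [tsub_le_iff_left]
  have hsplit : Multiset.card (W - T₁) + Multiset.card (W ∩ T₁) = Multiset.card W := by
    rw [← Multiset.card_add, Multiset.sub_add_inter]
  have hc₁ := Multiset.card_le_card hle₁
  have hc₂ := Multiset.card_le_card hle₂
  rw [Multiset.card_add] at hcard
  by_cases hbig : Multiset.card T₁ - S₁ ≤ Multiset.card (W ∩ T₁)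
  · obtain ⟨I, hI, hinfo⟩ := h₁.exists_le_of_card_sub_le hle₁ hbig
    exact ⟨I, hI.trans Multiset.inter_le_left, hinfo⟩
  · obtain ⟨I, hI, hinfo⟩ := h₂.exists_le_of_card_sub_le hle₂ (by omega)
    exact ⟨I, hI.trans (Multiset.sub_le_self W T₁), hinfo⟩

theorem exists_card_eq_minSuperSize {S : ℕ} {T : Multiset ι} (hT : IsInfoSuperSet G S T) :
    ∃ T' : Multiset ι, IsInfoSuperSet G S T' ∧ Multiset.card T' = minSuperSize G S :=
  Nat.sInf_mem (s := {c | ∃ T' : Multiset ι, IsInfoSuperSet G S T' ∧ Multiset.card T' = c})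
    ⟨_, T, hT, rfl⟩

theorem minSuperSize_le_card {S : ℕ} {T : Multiset ι} (hT : IsInfoSuperSet G S T) :
    minSuperSize G S ≤ Multiset.card T :=
  Nat.sInf_le ⟨T, hT, rfl⟩

end IsInfoSuperSet

theorem minSuperSize_add_le {S₁ S₂ : ℕ} {T₁ T₂ : Multiset ι} (h₁ : IsInfoSuperSet G S₁ T₁)
    (h₂ : IsInfoSuperSet G S₂ T₂) :
    minSuperSize G (S₁ + S₂) ≤ minSuperSize G S₁ + minSuperSize G S₂ := by
  obtain ⟨U₁, hU₁, hcard₁⟩ := h₁.exists_card_eq_minSuperSize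
  obtain ⟨U₂, hU₂, hcard₂⟩ := h₂.exists_card_eq_minSuperSize
  calc minSuperSize G (S₁ + S₂) ≤ Multiset.card (U₁ + U₂) := (hU₁.add hU₂).minSuperSize_le_card
    _ = minSuperSize G S₁ + minSuperSize G S₂ := by rw [Multiset.card_add, hcard₁, hcard₂]

end

theorem superset_additivity_general {F : Type*} [Field F] {n k S1 S2 : ℕ}
    (G : Matrix (Fin k) (Fin n) F)
    (T1 T2 : Multiset (Fin n))
    (hT1 : IsInfoSuperSet G S1 T1) (hT2 : IsInfoSuperSet G S2 T2) :
    IsInfoSuperSet G (S1 + S2) (T1 + T2) ∧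
      minSuperSize G (S1 + S2) ≤ minSuperSize G S1 + minSuperSize G S2 :=
  ⟨hT1.add hT2, minSuperSize_add_le hT1 hT2⟩

/-- If `T1` is an `S1`-information super-set and `T2` an `S2`-information super-set for an
`[n,k]_q` code with minimum distance `d_min` and `0 < S1, S2 < d_min`, then the multiset
union `T1 ⊎ T2` is an `(S1+S2)`-information super-set; consequently
`L(S1+S2) ≤ L(S1) + L(S2)` for the minimum super-set sizes. -/
theorem superset_additivity {F : Type*} [Field F] [DecidableEq F] {n k dmin S1 S2 : ℕ}
    (G : Matrix (Fin k) (Fin n) F)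
    (hG : LinearIndependent F fun i : Fin k => G i)
    (hlb : ∀ u : Fin k → F, u ≠ 0 → dmin ≤ hammingNorm (Matrix.vecMul u G))
    (hex : ∃ u : Fin k → F, u ≠ 0 ∧ hammingNorm (Matrix.vecMul u G) = dmin)
    (hS1 : 0 < S1) (hS1' : S1 < dmin) (hS2 : 0 < S2) (hS2' : S2 < dmin)
    (T1 T2 : Multiset (Fin n))
    (hT1 : IsInfoSuperSet G S1 T1) (hT2 : IsInfoSuperSet G S2 T2) :
    IsInfoSuperSet G (S1 + S2) (T1 + T2) ∧
      minSuperSize G (S1 + S2) ≤ minSuperSize G S1 + minSuperSize G S2 :=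
  superset_additivity_general G T1 T2 hT1 hT2
end
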